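/- arXiv:2007.01399 — 2 statements merged into one kernel-verified Lean document; each statement's English description precedes it below -/
import Mathlib

section
/- Let W = Der(k[[x₁,…,x_m]]) be the Lie algebra of formal vector fields, O = k[[x₁,…,x_m]], and z a Lie subalgebra of gl_l(k). Let D be an associative algebra containing O and elements y₁,…,y_l, u₁,…,u_l. Then the map Φ: W ⋉ (z ⊗ O) → D defined by Φ(v + A ⊗ p) = v + p·(−Σ_{i,j} A_{ij} y_j u_i), is a Lie algebra homomorphism into D with its commutator bracket, provided: v acts as a derivation extending the vector field action on O, [u_i, y_j] = δ_{ij}, [u_i, x_k] is given by the natural action, the y's commute among themselves and with O, and the u's commute among themselves. -/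
/-!
On the span of the `y j * u i`, the Weyl relations `⁅u i, y j⁆ = δᵢⱼ` reproduce the matrix-unit
relations, so `ρ A := -∑ A i j • y j * u i` is a Lie algebra map `gl_l → D`; its image commutes
with `ι(O)` and with `θ(W)`. Expanding `⁅θ v + ι p * ρ A, θ v' + ι p' * ρ A'⁆` by bilinearity
leaves four commutators: `⁅θ v, θ v'⁆ = θ ⁅v, v'⁆`, the two mixed ones give `ι (v p') * ρ A'` and
`-ι (v' p) * ρ A` because `θ v` acts on `ι(O)` as the derivation `v`, and the last one is
`ι (p * p') * ρ ⁅A, A'⁆` because `ι(O)` is commutative.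
-/

open Finset

section
variable {R : Type*} [Ring R]

theorem lie_mul_of_commute {a b c : R} (h : Commute a c) : ⁅a, b * c⁆ = ⁅a, b⁆ * c := by
  simp only [Ring.lie_def, sub_mul, mul_assoc, h.eq]

theorem mul_lie_mul_of_commute {a a' b b' : R} (ha : Commute a a') (hb : Commute b a')
    (hb' : Commute b' a) : ⁅a * b, a' * b'⁆ = a * a' * ⁅b, b'⁆ := by
  simp only [Ring.lie_def, mul_sub, mul_assoc, ← mul_assoc b a', hb.eq, ← mul_assoc b' a,
    hb'.eq]
  rw [← mul_assoc a' a, ← ha.eq, mul_assoc]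

theorem lie_mul_mul_of_weyl {n : Type*} [DecidableEq n] {y u : n → R}
    (huy : ∀ i j, ⁅u i, y j⁆ = if i = j then 1 else 0)
    (hyy : ∀ i j, Commute (y i) (y j)) (huu : ∀ i j, Commute (u i) (u j)) (i j a b : n) :
    ⁅y j * u i, y b * u a⁆
      = (if i = b then y j * u a else 0) - (if a = j then y b * u i else 0) := by
  have hyu : ∀ i j, u i * y j = y j * u i + if i = j then 1 else 0 := fun i j =>
    eq_add_of_sub_eq' (huy i j)
  calc ⁅y j * u i, y b * u a⁆ = y j * (u i * y b) * u a - y b * (u a * y j) * u i := by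
        simp only [Ring.lie_def, mul_assoc]
    _ = y j * y b * (u i * u a) - y b * y j * (u a * u i)
          + ((if i = b then y j * u a else 0) - (if a = j then y b * u i else 0)) := by
        simp only [hyu, mul_add, add_mul, mul_ite, ite_mul, mul_one, mul_zero, zero_mul, mul_assoc]
        abel
    _ = _ := by rw [(hyy j b).eq, (huu i a).eq, sub_self, zero_add]

variable {k n : Type*} [CommRing k] [Algebra k R] [Fintype n]

/-- The realization of `gl_n` by quadratic elements of a Weyl algebra. -/
def weylRep (y u : n → R) (A : Matrix n n k) : R :=
  -∑ i, ∑ j, A i j • (y j * u i)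

theorem commute_weylRep {x : R} {y u : n → R} (hy : ∀ j, Commute x (y j))
    (hu : ∀ i, Commute x (u i)) (A : Matrix n n k) : Commute x (weylRep y u A) :=
  .neg_right <| .sum_right _ _ _ fun i _ => .sum_right _ _ _ fun j _ =>
    ((hy j).mul_right (hu i)).smul_right _

theorem lie_weylRep_left (y u : n → R) (A : Matrix n n k) (x : R) :
    ⁅weylRep y u A, x⁆ = -∑ i, ∑ j, A i j • ⁅y j * u i, x⁆ := by
  simp only [weylRep, Ring.lie_def, neg_mul, mul_neg, sum_mul, mul_sum, smul_mul_assoc,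
    mul_smul_comm, smul_sub, sum_sub_distrib, sub_neg_eq_add, neg_sub]
  abel

theorem lie_weylRep_right (y u : n → R) (A : Matrix n n k) (x : R) :
    ⁅x, weylRep y u A⁆ = -∑ i, ∑ j, A i j • ⁅x, y j * u i⁆ := by
  simp only [weylRep, Ring.lie_def, neg_mul, mul_neg, sum_mul, mul_sum, smul_mul_assoc,
    mul_smul_comm, smul_sub, sum_sub_distrib, sub_neg_eq_add, neg_sub]
  abel

theorem mul_lie_weylRep [DecidableEq n] {y u : n → R}
    (huy : ∀ i j, ⁅u i, y j⁆ = if i = j then 1 else 0)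
    (hyy : ∀ i j, Commute (y i) (y j)) (huu : ∀ i j, Commute (u i) (u j))
    (B : Matrix n n k) (i j : n) :
    ⁅y j * u i, weylRep y u B⁆ = ∑ b, B j b • (y b * u i) - ∑ a, B a i • (y j * u a) := by
  simp only [lie_weylRep_right, lie_mul_mul_of_weyl huy hyy huu, smul_sub, smul_ite, smul_zero,
    sum_sub_distrib, sum_ite_irrel, sum_const_zero, sum_ite_eq, sum_ite_eq', mem_univ, if_true,
    neg_sub]

theorem weylRep_map_lie [DecidableEq n] {y u : n → R}
    (huy : ∀ i j, ⁅u i, y j⁆ = if i = j then 1 else 0)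
    (hyy : ∀ i j, Commute (y i) (y j)) (huu : ∀ i j, Commute (u i) (u j)) (A B : Matrix n n k) :
    weylRep y u ⁅A, B⁆ = ⁅weylRep y u A, weylRep y u B⁆ := by
  symm
  rw [lie_weylRep_left]
  simp only [mul_lie_weylRep huy hyy huu, smul_sub, smul_sum, smul_smul, sum_sub_distrib]
  simp only [weylRep, Ring.lie_def, Matrix.sub_apply, Matrix.mul_apply, sub_smul, sum_smul,
    sum_sub_distrib]
  congr 2
  · exact sum_congr rfl fun i _ => sum_comm
  · simp only [mul_comm (A _ _)]
    exact sum_comm.trans <| (sum_congr rfl fun _ _ => sum_comm).trans sum_comm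

end

/-- the assignment Φ(v + A ⊗ p) = v + p·(−Σ_{i,j} A_{ij} y_j u_i) is a Lie
algebra homomorphism from W ⋉ (z ⊗ O) (W = Der(k[[x₁,…,x_m]]), z ⊆ gl_l(k)) into an
associative algebra D (with the commutator bracket) containing O and elements y, u
subject to the stated relations. -/
theorem semidirect_product_lie_algebra_hom
    (k : Type*) [Field k] (m l : ℕ)
    (D : Type*) [Ring D] [Algebra k D]
    -- the ring O = k[[x₁,…,x_m]] of formal power series, embedded in D
    (ι : MvPowerSeries (Fin m) k →ₐ[k] D)
    -- formal vector fields W = Der(O) realized in D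
    (θ : Derivation k (MvPowerSeries (Fin m) k) (MvPowerSeries (Fin m) k) →ₗ[k] D)
    -- the elements y₁,…,y_l, u₁,…,u_l of D
    (y u : Fin l → D)
    -- v acts as a derivation extending the vector field action on O
    (hθder : ∀ v f, θ v * ι f - ι f * θ v = ι (v f))
    (hθlie : ∀ v v', θ v * θ v' - θ v' * θ v = θ ⁅v, v'⁆)
    -- [u_i, y_j] = δ_{ij}
    (huy : ∀ i j, u i * y j - y j * u i = if i = j then 1 else 0)
    -- the u's and y's commute with O (the natural action of u_i on the x's is trivial)
    (huO : ∀ i f, u i * ι f = ι f * u i)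
    (hyO : ∀ j f, y j * ι f = ι f * y j)
    -- the u's and y's commute with the vector fields
    (huθ : ∀ i v, u i * θ v = θ v * u i)
    (hyθ : ∀ j v, y j * θ v = θ v * y j)
    -- the y's commute among themselves and the u's commute among themselves
    (hyy : ∀ i j, y i * y j = y j * y i)
    (huu : ∀ i j, u i * u j = u j * u i)
    -- Φ(v + A ⊗ p) = v + p·(−Σ_{i,j} A_{ij} y_j u_i)
    (Φ : Derivation k (MvPowerSeries (Fin m) k) (MvPowerSeries (Fin m) k) →
      Matrix (Fin l) (Fin l) k → MvPowerSeries (Fin m) k → D)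
    (hΦ : ∀ v A p, Φ v A p = θ v + ι p * (-(∑ i, ∑ j, A i j • (y j * u i)))) :
    -- Φ respects the semidirect-product Lie bracket
    ∀ v v' A A' p p',
      Φ v A p * Φ v' A' p' - Φ v' A' p' * Φ v A p
        = Φ ⁅v, v'⁆ (A * A' - A' * A) (p * p') + Φ 0 A' (v p') - Φ 0 A (v' p) := by
  intro v v' A A' p p'
  have hΦρ : ∀ w B q, Φ w B q = θ w + ι q * weylRep y u B := hΦ
  have hιρ : ∀ q (B : Matrix (Fin l) (Fin l) k), Commute (ι q) (weylRep y u B) := fun q =>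
    commute_weylRep (fun j => (hyO j q).symm) (fun i => (huO i q).symm)
  have hθι : ∀ w q (B : Matrix (Fin l) (Fin l) k),
      ⁅θ w, ι q * weylRep y u B⁆ = ι (w q) * weylRep y u B := fun w q B => by
    have hθρ := commute_weylRep (fun j => (hyθ j w).symm) (fun i => (huθ i w).symm) B
    rw [lie_mul_of_commute hθρ, Ring.lie_def, hθder]
  have hιι : ⁅ι p * weylRep y u A, ι p' * weylRep y u A'⁆
      = ι (p * p') * weylRep y u (A * A' - A' * A) := by
    rw [mul_lie_mul_of_commute ((Commute.all p p').map ι) (hιρ p' A).symm (hιρ p A').symm,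
      ← weylRep_map_lie huy hyy huu, map_mul, Ring.lie_def A A']
  have h₁ := hθι v p' A'
  have h₂ := hθι v' p A
  rw [Ring.lie_def] at h₁ h₂ hιι
  simp only [hΦρ, map_zero, zero_add]
  linear_combination (norm := noncomm_ring) hθlie v v' + h₁ - h₂ + hιι
end

section
/- Let X be a topological space, U = {U_α} an open cover, Λ a sheaf of associative C-algebras on X, and 0 → A → Γ →^p Λ → 0 a locally trivial square-zero extension, split over each U_α by C-linear sheaf maps j_α: Λ|_{U_α} → Γ|_{U_α} with p ∘ j_α = id. Then (i) h_{αβ} := j_β − j_α factors through A and defines a Čech 1-cocycle with values in the sheaf Hom_C(Λ, A), and (ii) f_α(λ₁, λ₂) := q_α(j_α(λ₁)j_α(λ₂)) with q_α = id − j_α ∘ p is a Hochschild 2-cocycle over U_α, and these satisfy the compatibility f_β − f_α = d h_{αβ} on overlaps, where d is the Hochschild differential. -/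
/-!
The defect `f_s(x, y) = s x * s y - s (x * y)` of any map `s : Λ → Γ` is a Hochschild
2-cocycle for the action of `Λ` on `Γ` through `s`: it is the coboundary of the 1-cochain `s`,
and the cocycle identity only uses associativity in `Λ` and `Γ`. Expanding `f_t - f_s` with
`h = t - s` gives `d h` plus the extra term `h x * h y`; when `s` and `t` are sections of `p`,
both factors lie in `ker p`, so this term vanishes because `(ker p)² = 0`.
-/

theorem map_sub_eq_zero_of_sections {Λ Γ F : Type*} [AddGroup Λ] [AddGroup Γ]
    [FunLike F Γ Λ] [AddMonoidHomClass F Γ Λ] (p : F) {s t : Λ → Γ}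
    (hs : ∀ x, p (s x) = x) (ht : ∀ x, p (t x) = x) (x : Λ) :
    p (t x - s x) = 0 := by
  rw [map_sub, hs, ht, sub_self]

section MulDefect

variable {Λ Γ : Type*} [Ring Λ] [Ring Γ]

def mulDefect (s : Λ → Γ) (x y : Λ) : Γ := s x * s y - s (x * y)

theorem mulDefect_hochschild_cocycle (s : Λ → Γ) (x y z : Λ) :
    s x * mulDefect s y z - mulDefect s (x * y) z + mulDefect s x (y * z)
      - mulDefect s x y * s z = 0 := by
  simp only [mulDefect]
  rw [mul_assoc x y z]
  noncomm_ring

theorem mulDefect_sub_mulDefect (s t : Λ → Γ) (x y : Λ) :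
    mulDefect t x y - mulDefect s x y
      = s x * (t y - s y) - (t (x * y) - s (x * y)) + (t x - s x) * s y
        + (t x - s x) * (t y - s y) := by
  simp only [mulDefect]
  noncomm_ring

theorem mulDefect_sub_mulDefect_of_sq_zero {F : Type*} [FunLike F Γ Λ]
    [AddMonoidHomClass F Γ Λ] (p : F) (hsq : ∀ a b : Γ, p a = 0 → p b = 0 → a * b = 0)
    {s t : Λ → Γ} (hs : ∀ x, p (s x) = x) (ht : ∀ x, p (t x) = x) (x y : Λ) :
    mulDefect t x y - mulDefect s x y
      = s x * (t y - s y) - (t (x * y) - s (x * y)) + (t x - s x) * s y := by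
  rw [mulDefect_sub_mulDefect, hsq _ _ (map_sub_eq_zero_of_sections p hs ht x)
    (map_sub_eq_zero_of_sections p hs ht y), add_zero]

end MulDefect

theorem cech_hochschild_cocycle_of_local_splittings_general
    (Λ Γ : Type*) [Ring Λ] [Algebra ℂ Λ] [Ring Γ] [Algebra ℂ Γ]
    (p : Γ →ₐ[ℂ] Λ)
    (hsq : ∀ a b : Γ, p a = 0 → p b = 0 → a * b = 0)
    -- the index set of the cover and the local ℂ-linear splittings
    (I : Type*) (j : I → (Λ →ₗ[ℂ] Γ))
    (hj : ∀ (α : I) (x : Λ), p (j α x) = x) :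
    -- (i) h_{αβ} := j_β − j_α takes values in ker p ≅ A and δh = 0
    (∀ (α β : I) (x : Λ), p ((j β - j α) x) = 0) ∧
    (∀ (α β γ : I) (x : Λ),
      (j β - j α) x + (j γ - j β) x - (j γ - j α) x = 0) ∧
    -- (ii) f_α(x,y) = q_α(j_α(x)j_α(y)) = j_α(x)j_α(y) − j_α(xy) is a Hochschild
    -- 2-cocycle (valued in ker p, with the bimodule action via the lifts j_α)
    (∀ (α : I) (x y z : Λ),
      j α x * (j α y * j α z - j α (y * z))
        - (j α (x * y) * j α z - j α ((x * y) * z))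
        + (j α x * j α (y * z) - j α (x * (y * z)))
        - (j α x * j α y - j α (x * y)) * j α z = 0) ∧
    -- and f_β − f_α = d h_{αβ}
    (∀ (α β : I) (x y : Λ),
      (j β x * j β y - j β (x * y)) - (j α x * j α y - j α (x * y))
        = j α x * (j β - j α) y - (j β - j α) (x * y) + (j β - j α) x * j α y) := by
  refine ⟨fun α β => map_sub_eq_zero_of_sections p (hj α) (hj β), fun α β γ x => ?_,
    fun α => mulDefect_hochschild_cocycle (j α),
    fun α β => mulDefect_sub_mulDefect_of_sq_zero p hsq (hj α) (hj β)⟩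
  simp only [LinearMap.sub_apply]
  abel

/-- for a locally trivial square-zero extension 0 → A → Γ →p Λ → 0 of
sheaves of ℂ-algebras split over each member of a cover by ℂ-linear sections j_α
(here formulated, as the verification is local, on sections over the relevant opens and
overlaps): (i) h_{αβ} = j_β − j_α takes values in A = ker p and is a Čech 1-cocycle;
(ii) f_α = q_α(j_α(·)j_α(·)) (q_α = id − j_α∘p) is a Hochschild 2-cocycle, and
f_β − f_α = d h_{αβ}, where the bimodule action of Λ on ker p is through the lifts j. -/
theorem cech_hochschild_cocycle_of_local_splittings
    (Λ Γ : Type*) [Ring Λ] [Algebra ℂ Λ] [Ring Γ] [Algebra ℂ Γ]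
    (p : Γ →ₐ[ℂ] Λ) (hp : Function.Surjective p)
    (hsq : ∀ a b : Γ, p a = 0 → p b = 0 → a * b = 0)
    -- the index set of the cover and the local ℂ-linear splittings
    (I : Type*) (j : I → (Λ →ₗ[ℂ] Γ))
    (hj : ∀ (α : I) (x : Λ), p (j α x) = x) :
    -- (i) h_{αβ} := j_β − j_α takes values in ker p ≅ A and δh = 0
    (∀ (α β : I) (x : Λ), p ((j β - j α) x) = 0) ∧
    (∀ (α β γ : I) (x : Λ),
      (j β - j α) x + (j γ - j β) x - (j γ - j α) x = 0) ∧
    -- (ii) f_α(x,y) = q_α(j_α(x)j_α(y)) = j_α(x)j_α(y) − j_α(xy) is a Hochschild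
    -- 2-cocycle (valued in ker p, with the bimodule action via the lifts j_α)
    (∀ (α : I) (x y z : Λ),
      j α x * (j α y * j α z - j α (y * z))
        - (j α (x * y) * j α z - j α ((x * y) * z))
        + (j α x * j α (y * z) - j α (x * (y * z)))
        - (j α x * j α y - j α (x * y)) * j α z = 0) ∧
    -- and f_β − f_α = d h_{αβ}
    (∀ (α β : I) (x y : Λ),
      (j β x * j β y - j β (x * y)) - (j α x * j α y - j α (x * y))
        = j α x * (j β - j α) y - (j β - j α) (x * y) + (j β - j α) x * j α y) :=
  cech_hochschild_cocycle_of_local_splittings_general Λ Γ p hsq I j hj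
end
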